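/- (Mean-payoff parity and energy parity differ for MDPs) There exists an MDP M = (Q, E, δ) with Q₁ = ∅ (i.e., a Markov chain), a priority function p : Q → {0,1}, a weight function w : Q × Q → ℤ, and a state q ∈ Q such that, for the unique (trivial) strategy, P_q(Parity(p) ∩ MeanPayoff^{≥0}) = 1, while for every initial credit c₀ ∈ ℕ, P_q(Parity(p) ∩ PosEnergy(c₀)) < 1. -/

import Mathlib

open MeasureTheory Filter
open scoped Classical ENNReal

namespace MPP

/-- A Markov decision process: states `Q`, player-1 states `Q1` (the rest are
probabilistic), edge relation `E` with every state having a successor, and a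
probabilistic transition function `δ` whose support at every probabilistic state
is exactly the set of successors. -/
structure MDP (Q : Type) where
  Q1 : Set Q
  E : Q → Q → Prop
  E_nonempty : ∀ q, ∃ q', E q q'
  δ : Q → PMF Q
  δ_support : ∀ q, q ∉ Q1 → ∀ q', q' ∈ (δ q).support ↔ E q q'

/-- A strategy: given the history `h` (the states strictly before the current one)
and the current state `q`, if `q` is a player-1 state it selects a distribution on
successors of `q`. -/
structure Strategy {Q : Type} (M : MDP Q) where
  act : List Q → Q → PMF Q
  act_support : ∀ h q, q ∈ M.Q1 → ∀ q', q' ∈ (act h q).support → M.E q q'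

variable {Q : Type}

/-- One step of the history-dependent transition kernel. -/
noncomputable def MDP.step (M : MDP Q) (σ : Strategy M) (h : List Q) (q : Q) : PMF Q :=
  if q ∈ M.Q1 then σ.act h q else M.δ q

/-- Probability of traversing the finite sequence `future` starting at `q` with
past history `h`. -/
noncomputable def pathProb (M : MDP Q) (σ : Strategy M) : List Q → Q → List Q → ℝ≥0∞
  | _, _, [] => 1
  | h, q, q' :: rest => M.step σ h q q' * pathProb M σ (h ++ [q]) q' rest

/-- `μ` is the trajectory measure (Ionescu–Tulcea) on plays of `M` under strategy
`σ`, starting at `q`: it is the (unique) probability measure on `ℕ → Q` (product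
σ-algebra) giving every cylinder its product probability. -/
def IsTrajMeasure [MeasurableSpace Q] (M : MDP Q) (σ : Strategy M) (q : Q)
    (μ : Measure (ℕ → Q)) : Prop :=
  IsProbabilityMeasure μ ∧
    ∀ (n : ℕ) (f : ℕ → Q),
      μ {ρ | ∀ i ≤ n, ρ i = f i} =
        if f 0 = q then pathProb M σ [] q ((List.range n).map fun i => f (i + 1)) else 0

/-- The set of states occurring infinitely often in a play. -/
def infSet (ρ : ℕ → Q) : Set Q := {s | ∀ N, ∃ n, N ≤ n ∧ ρ n = s}

/-- End-component: nonempty, closed under probabilistic transitions, every state has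
a successor inside, and strongly connected inside. -/
def MDP.IsEndComponent (M : MDP Q) (U : Set Q) : Prop :=
  U.Nonempty ∧
    (∀ q ∈ U, q ∉ M.Q1 → (M.δ q).support ⊆ U) ∧
    (∀ q ∈ U, ∃ q' ∈ U, M.E q q') ∧
    ∀ q ∈ U, ∀ q' ∈ U, Relation.ReflTransGen (fun a b => a ∈ U ∧ b ∈ U ∧ M.E a b) q q'

/-- Energy level of the length-`n` prefix of a play. -/
def EL (w : Q → Q → ℤ) (ρ : ℕ → Q) (n : ℕ) : ℤ :=
  ∑ i ∈ Finset.range n, w (ρ i) (ρ (i + 1))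

/-- Mean payoff (liminf of averages) of a play. -/
noncomputable def MP (w : Q → Q → ℤ) (ρ : ℕ → Q) : ℝ :=
  liminf (fun n => (EL w ρ n : ℝ) / n) atTop

/-- Parity objective: the minimal priority visited infinitely often is even. -/
def ParitySet (p : Q → ℕ) : Set (ℕ → Q) := {ρ | Even (sInf (p '' infSet ρ))}

def MeanPayoffGe (w : Q → Q → ℤ) (ν : ℝ) : Set (ℕ → Q) := {ρ | ν ≤ MP w ρ}

def MeanPayoffGt (w : Q → Q → ℤ) (ν : ℝ) : Set (ℕ → Q) := {ρ | ν < MP w ρ}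

/-- Energy objective with initial credit `c₀`. -/
def PosEnergy (w : Q → Q → ℤ) (c₀ : ℕ) : Set (ℕ → Q) :=
  {ρ | ∀ n, 0 ≤ (c₀ : ℤ) + EL w ρ n}

/-- Büchi objective: some state of `B` is visited infinitely often. -/
def Buchi (B : Set Q) : Set (ℕ → Q) := {ρ | (infSet ρ ∩ B).Nonempty}

/-- Expected mean-payoff value: supremum over strategies of the expectation of the
mean payoff under the trajectory measure. -/
noncomputable def ValMP [MeasurableSpace Q] (M : MDP Q) (w : Q → Q → ℤ) (q : Q) : ℝ :=
  sSup {x | ∃ σ : Strategy M, ∃ μ : Measure (ℕ → Q),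
    IsTrajMeasure M σ q μ ∧ x = ∫ ρ, MP w ρ ∂μ}

/-! The Markov chain on `Bool` leaves `false` towards the absorbing state `true` with
probability `1/2` per step and loses one unit of energy on every `false → false` step.
Almost surely it is absorbed after finitely many steps, so the energy level is eventually
constant and the mean payoff is `0`. But for every credit `c₀` it stays in `false` for the
first `c₀ + 1` steps with probability `2⁻¹ ^ (c₀ + 1) > 0`, exhausting the credit.
All priorities are `0`, so the parity condition holds on every play. -/

def prefixCylinder (n : ℕ) (f : ℕ → Q) : Set (ℕ → Q) := {ρ | ∀ i ≤ n, ρ i = f i}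

theorem measurableSet_prefixCylinder [MeasurableSpace Q] [MeasurableSingletonClass Q]
    (n : ℕ) (f : ℕ → Q) : MeasurableSet (prefixCylinder n f) := by
  have : prefixCylinder n f = ⋂ i ∈ Set.Iic n, (fun ρ : ℕ → Q => ρ i) ⁻¹' {f i} := by
    ext ρ; simp [prefixCylinder]
  rw [this]
  exact .biInter (Set.to_countable _) fun i _ => measurable_pi_apply i (measurableSet_singleton _)

theorem measure_eq_zero_of_prefixCylinder_null [Countable Q] [MeasurableSpace Q]
    {μ : Measure (ℕ → Q)} {S : Set (ℕ → Q)} (n : ℕ)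
    (hS : ∀ ρ ∈ S, μ (prefixCylinder n ρ) = 0) : μ S = 0 := by
  have hcount : ((fun ρ => prefixCylinder n ρ) '' S).Countable := by
    refine (Set.countable_range fun v : Fin (n + 1) → Q => {ρ' | ∀ i, ρ' i = v i}).mono ?_
    rintro _ ⟨ρ, -, rfl⟩
    refine ⟨fun i => ρ i, ?_⟩
    ext ρ'
    simp [prefixCylinder, Fin.forall_iff]
  have hcover : S ⊆ ⋃₀ ((fun ρ => prefixCylinder n ρ) '' S) := fun ρ hρ =>
    Set.mem_sUnion_of_mem (show ρ ∈ prefixCylinder n ρ from fun _ _ => rfl)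
      (Set.mem_image_of_mem _ hρ)
  exact measure_mono_null hcover ((measure_sUnion_null_iff hcount).2 (by simpa using hS))

theorem pathProb_replicate {M : MDP Q} {σ : Strategy M} {q : Q} {r : ℝ≥0∞}
    (hq : ∀ h, M.step σ h q q = r) (n : ℕ) (h : List Q) :
    pathProb M σ h q (List.replicate n q) = r ^ n := by
  induction n generalizing h with
  | zero => simp [pathProb]
  | succ n ih => rw [List.replicate_succ, pathProb, hq, ih, pow_succ']

theorem pathProb_eq_zero_of_step_eq_zero {M : MDP Q} {σ : Strategy M} {a b : Q}
    (hab : ∀ h, M.step σ h a b = 0) (l h : List Q) (q : Q) (i : ℕ)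
    (ha : (q :: l)[i]? = some a) (hb : (q :: l)[i + 1]? = some b) :
    pathProb M σ h q l = 0 := by
  induction l generalizing h q i with
  | nil => simp at hb
  | cons q' l ih =>
    rw [pathProb]
    cases i with
    | zero =>
      obtain ⟨rfl, rfl⟩ : q = a ∧ q' = b := by simp_all
      rw [hab, zero_mul]
    | succ i => rw [ih _ _ i ha hb, mul_zero]

namespace IsTrajMeasure

variable [MeasurableSpace Q] {M : MDP Q} {σ : Strategy M} {q : Q} {μ : Measure (ℕ → Q)}

theorem measure_prefixCylinder_const (hμ : IsTrajMeasure M σ q μ) {r : ℝ≥0∞}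
    (hq : ∀ h, M.step σ h q q = r) (n : ℕ) : μ (prefixCylinder n fun _ => q) = r ^ n := by
  rw [prefixCylinder, hμ.2, if_pos rfl, List.map_const', List.length_range,
    pathProb_replicate hq]

theorem ae_not_step [Countable Q] (hμ : IsTrajMeasure M σ q μ) {a b : Q}
    (hab : ∀ h, M.step σ h a b = 0) : ∀ᵐ ρ ∂μ, ∀ n, ¬(ρ n = a ∧ ρ (n + 1) = b) := by
  refine ae_all_iff.2 fun n => measure_eq_zero_of_prefixCylinder_null (n + 1) ?_
  intro ρ hρ
  obtain ⟨hρa, hρb⟩ : ρ n = a ∧ ρ (n + 1) = b := not_not.1 hρ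
  rw [prefixCylinder, hμ.2]
  split_ifs with h0
  · refine pathProb_eq_zero_of_step_eq_zero hab _ _ _ n ?_ ?_ <;>
    · subst h0
      cases n <;> simp [hρa, hρb]
  · rfl

theorem ae_exists_ne (hμ : IsTrajMeasure M σ q μ) {r : ℝ≥0∞}
    (hq : ∀ h, M.step σ h q q = r) (hr : r < 1) : ∀ᵐ ρ ∂μ, ∃ n, ρ n ≠ q := by
  refine le_antisymm (ge_of_tendsto' (ENNReal.tendsto_pow_atTop_nhds_zero_of_lt_one hr)
    fun n => ?_) zero_le
  rw [← hμ.measure_prefixCylinder_const hq n]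
  exact measure_mono fun ρ hρ i _ => by simpa using (not_exists.1 hρ) i

end IsTrajMeasure

theorem ParitySet_const_zero : ParitySet (fun _ : Q => 0) = Set.univ := by
  refine Set.eq_univ_of_forall fun ρ => ?_
  rcases (infSet ρ).eq_empty_or_nonempty with h | h
  · simp [ParitySet, h]
  · simp [ParitySet, h.image_const]

theorem MP_eq_zero_of_eventually_weight_zero {w : Q → Q → ℤ} {ρ : ℕ → Q}
    (h : ∀ᶠ n in atTop, w (ρ n) (ρ (n + 1)) = 0) : MP w ρ = 0 := by
  obtain ⟨N, hN⟩ := eventually_atTop.1 h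
  have hconst : ∀ n ≥ N, EL w ρ n = EL w ρ N := fun n hn => by
    induction n, hn using Nat.le_induction with
    | base => rfl
    | succ n hn ih => rw [EL, Finset.sum_range_succ, ← EL, ih, hN n hn, add_zero]
  have hlim : Tendsto (fun n : ℕ => (EL w ρ n : ℝ) / n) atTop (nhds 0) :=
    (tendsto_const_div_atTop_nhds_zero_nat (EL w ρ N : ℝ)).congr'
      (eventually_atTop.2 ⟨N, fun n hn => by simp only [hconst n hn]⟩)
  exact hlim.liminf_eq

noncomputable def absorbingChain : MDP Bool where
  Q1 := ∅
  E a b := a = false ∨ b = true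
  E_nonempty _ := ⟨true, Or.inr rfl⟩
  δ q := if q then PMF.pure true else PMF.uniformOfFintype Bool
  δ_support q _ q' := by
    cases q <;> cases q' <;> simp [PMF.support_uniformOfFintype, PMF.support_pure]

def drainWeight : Bool → Bool → ℤ
  | false, false => -1
  | _, _ => 0

section absorbingChain

variable {σ : Strategy absorbingChain} {μ : Measure (ℕ → Bool)}

theorem absorbingChain_step_false_false (h : List Bool) :
    absorbingChain.step σ h false false = 2⁻¹ := by
  simp [MDP.step, absorbingChain, PMF.uniformOfFintype_apply]

theorem absorbingChain_step_true_false (h : List Bool) :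
    absorbingChain.step σ h true false = 0 := by
  simp [MDP.step, absorbingChain]

theorem absorbingChain_ae_eventually_true (hμ : IsTrajMeasure absorbingChain σ false μ) :
    ∀ᵐ ρ ∂μ, ∀ᶠ n in atTop, ρ n = true := by
  filter_upwards [hμ.ae_exists_ne absorbingChain_step_false_false (by norm_num),
    hμ.ae_not_step absorbingChain_step_true_false] with ρ ⟨m, hm⟩ hstay
  refine eventually_atTop.2 ⟨m, fun n hn => ?_⟩
  induction n, hn using Nat.le_induction with
  | base => simpa using hm
  | succ k _ ih => simpa [ih] using hstay k

theorem absorbingChain_measure_meanPayoffGe (hμ : IsTrajMeasure absorbingChain σ false μ) :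
    μ (MeanPayoffGe drainWeight 0) = 1 := by
  have hae : ∀ᵐ ρ ∂μ, ρ ∈ MeanPayoffGe drainWeight 0 := by
    filter_upwards [absorbingChain_ae_eventually_true hμ] with ρ hρ
    have hw : ∀ᶠ n in atTop, drainWeight (ρ n) (ρ (n + 1)) = 0 :=
      hρ.mono fun n hn => by simp [hn, drainWeight]
    exact (MP_eq_zero_of_eventually_weight_zero hw).ge
  have := hμ.1
  exact (measure_congr (ae_eq_univ.2 hae)).trans measure_univ

theorem EL_drainWeight_of_mem_prefixCylinder {ρ : ℕ → Bool} {n : ℕ}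
    (hρ : ρ ∈ prefixCylinder n fun _ => false) : EL drainWeight ρ n = -n := by
  rw [EL, Finset.sum_congr rfl fun i hi => by
    rw [hρ i (Finset.mem_range.1 hi).le, hρ (i + 1) (Finset.mem_range.1 hi)]]
  simp [drainWeight]

theorem absorbingChain_measure_posEnergy_lt_one (hμ : IsTrajMeasure absorbingChain σ false μ)
    (c₀ : ℕ) : μ (PosEnergy drainWeight c₀) < 1 := by
  have := hμ.1
  have hsub : PosEnergy drainWeight c₀ ⊆ (prefixCylinder (c₀ + 1) fun _ => false)ᶜ :=
    fun ρ hρ hcyl => by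
      have := hρ (c₀ + 1)
      rw [EL_drainWeight_of_mem_prefixCylinder hcyl] at this
      omega
  calc μ (PosEnergy drainWeight c₀)
      ≤ μ (prefixCylinder (c₀ + 1) fun _ => false)ᶜ := measure_mono hsub
    _ = 1 - 2⁻¹ ^ (c₀ + 1) := by
      rw [prob_compl_eq_one_sub (measurableSet_prefixCylinder _ _),
        hμ.measure_prefixCylinder_const absorbingChain_step_false_false]
    _ < 1 := ENNReal.sub_lt_self ENNReal.one_ne_top one_ne_zero (by simp)

end absorbingChain

theorem meanpayoff_parity_ne_energy_parity :
    ∃ (Q : Type) (_ : Fintype Q) (_ : Nonempty Q) (mQ : MeasurableSpace Q)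
      (_ : @MeasurableSingletonClass Q mQ)
      (M : MDP Q) (p : Q → ℕ) (w : Q → Q → ℤ) (q : Q),
      M.Q1 = ∅ ∧ (∀ s, p s ≤ 1) ∧
        ∀ (σ : Strategy M) (μ : @Measure (ℕ → Q) (by exact MeasurableSpace.pi)),
          @IsTrajMeasure Q mQ M σ q μ →
            μ (ParitySet p ∩ MeanPayoffGe w 0) = 1 ∧
              ∀ c₀ : ℕ, μ (ParitySet p ∩ PosEnergy w c₀) < 1 := by
  refine ⟨Bool, inferInstance, inferInstance, inferInstance, inferInstance, absorbingChain,
    fun _ => 0, drainWeight, false, rfl, fun _ => zero_le_one, fun σ μ hμ => ?_⟩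
  simp only [ParitySet_const_zero, Set.univ_inter]
  exact ⟨absorbingChain_measure_meanPayoffGe hμ, absorbingChain_measure_posEnergy_lt_one hμ⟩

end MPP
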